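/- arXiv:2204.03406 — 5 statements merged into one kernel-verified Lean document; each statement's English description precedes it below -/
import Mathlib

section
/- Let p̂ be the maximum-entropy distribution in the equivalence class [f] determined by a binary constraint matrix C and distribution f. Then for every p ∈ [f] with p_α = 0 whenever p̂_α = 0, the identity Σ_{α : p̂_α > 0} (p_α − p̂_α) log p̂_α = 0 holds, and consequently D_KL(p‖p̂) = H(p̂) − H(p). -/
/-- The equivalence class `[f]` of probability distributions sharing the marginals of `f`
prescribed by the binary constraint matrix `C`. -/
def eqClass {A : Type*} [Fintype A] {D : ℕ} (C : Fin D → A → ℝ) (f : A → ℝ) :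
    Set (A → ℝ) :=
  {p | (∀ α, 0 ≤ p α) ∧ ∑ α, p α = 1 ∧
    ∀ a : Fin D, ∑ α, C a α * p α = ∑ α, C a α * f α}

/-- Pythagorean lemma, necessity direction: Let `phat` be the
maximum-entropy distribution in `[f]`.  Then for every `p ∈ [f]` with `p α = 0` whenever
`phat α = 0`, one has `∑_{α : phat α > 0} (p α - phat α) * log (phat α) = 0`, and
consequently `D_KL(p‖phat) = H(phat) - H(p)`. -/
theorem pythagorean_of_maxent {A : Type*} [Fintype A] {D : ℕ}
    (C : Fin D → A → ℝ) (hC : ∀ a α, C a α = 0 ∨ C a α = 1)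
    (f : A → ℝ) (hf0 : ∀ α, 0 ≤ f α) (hf1 : ∑ α, f α = 1)
    (phat : A → ℝ) (hphat : phat ∈ eqClass C f)
    (hmax : ∀ p ∈ eqClass C f,
      (-∑ α, p α * Real.log (p α)) ≤ (-∑ α, phat α * Real.log (phat α))) :
    ∀ p ∈ eqClass C f, (∀ α, phat α = 0 → p α = 0) →
      (∑ α, (if 0 < phat α then (p α - phat α) * Real.log (phat α) else 0)) = 0 ∧
      (∑ α, (if 0 < p α then p α * Real.log (p α / phat α) else 0)) =
        (-∑ α, phat α * Real.log (phat α)) - (-∑ α, p α * Real.log (p α)) := by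
  intro p hp hsupp
  obtain ⟨hp0, hp1, hpC⟩ := hp
  obtain ⟨hphat0, hphat1, hphatC⟩ := hphat
  set S : ℝ := ∑ α, (p α - phat α) * Real.log (phat α) with hSdef
  set K : ℝ := ∑ α, (p α - phat α) ^ 2 / phat α with hKdef
  have hK0 : 0 ≤ K :=
    Finset.sum_nonneg fun α _ => div_nonneg (sq_nonneg _) (hphat0 α)
  -- removing the `if` in the S-sum
  have hSif : (∑ α, (if 0 < phat α then (p α - phat α) * Real.log (phat α) else 0)) = S := by
    refine Finset.sum_congr rfl fun α _ => ?_
    by_cases h : 0 < phat α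
    · simp [h]
    · have h0 : phat α = 0 := le_antisymm (not_lt.mp h) (hphat0 α)
      simp [h0]
  -- the key claim: for any t such that the perturbation stays nonnegative
  have claim : ∀ t : ℝ, (∀ α, 0 ≤ phat α + t * (p α - phat α)) → -(t * S) ≤ t ^ 2 * K := by
    intro t hq0
    set q : A → ℝ := fun α => phat α + t * (p α - phat α) with hqdef
    have hqsupp : ∀ α, phat α = 0 → q α = 0 := by
      intro α h0
      have hpz := hsupp α h0
      simp [hqdef, h0, hpz]
    have hq1 : ∑ α, q α = 1 := by
      simp only [hqdef]
      rw [Finset.sum_add_distrib, ← Finset.mul_sum, Finset.sum_sub_distrib, hp1, hphat1]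
      ring
    have hqC : ∀ a, ∑ α, C a α * q α = ∑ α, C a α * f α := by
      intro a
      have h1 := hpC a
      have h2 := hphatC a
      have hrw : ∀ α, C a α * q α = C a α * phat α + t * (C a α * p α) - t * (C a α * phat α) := by
        intro α; simp only [hqdef]; ring
      calc ∑ α, C a α * q α
          = ∑ α, (C a α * phat α + t * (C a α * p α) - t * (C a α * phat α)) :=
            Finset.sum_congr rfl fun α _ => hrw α
        _ = (∑ α, C a α * phat α) + t * (∑ α, C a α * p α) - t * (∑ α, C a α * phat α) := by
            rw [Finset.sum_sub_distrib, Finset.sum_add_distrib, ← Finset.mul_sum,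
              ← Finset.mul_sum]
        _ = ∑ α, C a α * f α := by rw [h1, h2]; ring
    have hq0' : ∀ α, 0 ≤ q α := hq0
    have hent := hmax q ⟨hq0, hq1, hqC⟩
    have hent' : ∑ α, phat α * Real.log (phat α) ≤ ∑ α, q α * Real.log (q α) := by
      linarith
    -- decomposition: ∑ q log q = ∑ q log phat + ∑ q log (q/phat)
    have hdec : ∑ α, q α * Real.log (q α)
        = ∑ α, q α * Real.log (phat α) + ∑ α, q α * Real.log (q α / phat α) := by
      rw [← Finset.sum_add_distrib]
      refine Finset.sum_congr rfl fun α _ => ?_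
      rcases eq_or_lt_of_le (hq0' α) with h0 | hqpos
      · have hq' : q α = 0 := h0.symm
        simp [hq']
      · have hph : 0 < phat α := by
          rcases eq_or_lt_of_le (hphat0 α) with h | h
          · exact absurd (hqsupp α h.symm) (ne_of_gt hqpos)
          · exact h
        rw [Real.log_div (ne_of_gt hqpos) (ne_of_gt hph)]
        ring
    -- ∑ q log phat = ∑ phat log phat + t * S
    have hcross : ∑ α, q α * Real.log (phat α)
        = ∑ α, phat α * Real.log (phat α) + t * S := by
      rw [hSdef, Finset.mul_sum, ← Finset.sum_add_distrib]
      refine Finset.sum_congr rfl fun α _ => ?_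
      simp only [hqdef]; ring
    -- KL bound: ∑ q log (q/phat) ≤ t^2 * K
    have hKL : ∑ α, q α * Real.log (q α / phat α) ≤ t ^ 2 * K := by
      have step1 : ∑ α, q α * Real.log (q α / phat α)
          ≤ ∑ α, ((q α - phat α) ^ 2 / phat α + (q α - phat α)) := by
        refine Finset.sum_le_sum fun α _ => ?_
        rcases eq_or_lt_of_le (hq0' α) with h0 | hqpos
        · have hq' : q α = 0 := h0.symm
          rcases eq_or_lt_of_le (hphat0 α) with h | h
          · simp [hq', ← h]
          · have hne : phat α ≠ 0 := ne_of_gt h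
            have hz : (q α - phat α) ^ 2 / phat α + (q α - phat α) = 0 := by
              rw [hq']; field_simp; ring
            rw [hz, hq', zero_mul]
        · have hph : 0 < phat α := by
            rcases eq_or_lt_of_le (hphat0 α) with h | h
            · exact absurd (hqsupp α h.symm) (ne_of_gt hqpos)
            · exact h
          have hlog : Real.log (q α / phat α) ≤ q α / phat α - 1 :=
            Real.log_le_sub_one_of_pos (div_pos hqpos hph)
          have h1 : q α * Real.log (q α / phat α) ≤ q α * (q α / phat α - 1) :=
            mul_le_mul_of_nonneg_left hlog (le_of_lt hqpos)
          have h2 : q α * (q α / phat α - 1) = (q α - phat α) ^ 2 / phat α + (q α - phat α) := by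
            field_simp
            ring
          linarith
      have step2 : ∑ α, ((q α - phat α) ^ 2 / phat α + (q α - phat α)) = t ^ 2 * K := by
        rw [Finset.sum_add_distrib, Finset.sum_sub_distrib, hq1, hphat1, sub_self, add_zero,
          hKdef, Finset.mul_sum]
        refine Finset.sum_congr rfl fun α _ => ?_
        have : q α - phat α = t * (p α - phat α) := by simp only [hqdef]; ring
        rw [this, mul_pow, mul_div_assoc]
      linarith
    -- combine
    nlinarith [hent', hdec, hcross, hKL]
  -- epsilon lemma
  have eps_lemma : ∀ X c : ℝ, 0 < c → (∀ t : ℝ, 0 < t → t ≤ c → X ≤ t * K) → X ≤ 0 := by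
    intro X c hc h
    refine le_of_forall_pos_le_add fun ε hε => ?_
    have hKp : 0 < K + 1 := by linarith
    set t := min c (ε / (K + 1)) with htdef
    have ht : 0 < t := lt_min hc (div_pos hε hKp)
    have htc : t ≤ c := min_le_left _ _
    have hte : t ≤ ε / (K + 1) := min_le_right _ _
    have h1 := h t ht htc
    have h2 : t * (K + 1) ≤ ε := by
      rw [← le_div_iff₀ hKp]; exact hte
    nlinarith
  -- S ≥ 0 from positive perturbations
  have hSpos : 0 ≤ S := by
    have h := eps_lemma (-S) 1 one_pos ?_
    · linarith
    · intro t ht ht1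
      have hq0 : ∀ α, 0 ≤ phat α + t * (p α - phat α) := by
        intro α
        have h1 := hp0 α; have h2 := hphat0 α
        nlinarith
      have hc := claim t hq0
      have h3 : 0 ≤ t * (t * K + S) := by nlinarith
      have h4 : t * 0 ≤ t * (t * K + S) := by linarith
      have := le_of_mul_le_mul_left h4 ht
      linarith
  -- S ≤ 0 from negative perturbations
  have hex : ∃ α, 0 < phat α := by
    by_contra hcon
    push_neg at hcon
    have : ∑ α, phat α = 0 :=
      Finset.sum_eq_zero fun α _ => le_antisymm (hcon α) (hphat0 α)
    rw [hphat1] at this; norm_num at this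
  obtain ⟨α0, hα0⟩ := hex
  set T := Finset.univ.filter (fun α => 0 < phat α) with hTdef
  have hT : T.Nonempty := ⟨α0, by simp [hTdef, hα0]⟩
  set s0 := T.inf' hT phat with hs0def
  have hs0 : 0 < s0 := by
    rw [hs0def, Finset.lt_inf'_iff]
    intro b hb
    exact (Finset.mem_filter.mp hb).2
  have hSneg : S ≤ 0 := by
    apply eps_lemma S s0 hs0
    intro s hs hss0
    have hq0 : ∀ α, 0 ≤ phat α + (-s) * (p α - phat α) := by
      intro α
      by_cases h0 : phat α = 0
      · simp [h0, hsupp α h0]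
      · have hpos : 0 < phat α := (hphat0 α).lt_of_ne (Ne.symm h0)
        have hmem : α ∈ T := Finset.mem_filter.mpr ⟨Finset.mem_univ α, hpos⟩
        have hle : s0 ≤ phat α := Finset.inf'_le phat hmem
        have hple : p α ≤ 1 := by
          calc p α ≤ ∑ β, p β := Finset.single_le_sum (fun i _ => hp0 i) (Finset.mem_univ α)
            _ = 1 := hp1
        nlinarith [hp0 α]
    have hc := claim (-s) hq0
    have h3 : 0 ≤ s * (s * K - S) := by nlinarith
    have h4 : s * 0 ≤ s * (s * K - S) := by linarith
    have := le_of_mul_le_mul_left h4 hs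
    linarith
  have hS0 : S = 0 := le_antisymm hSneg hSpos
  constructor
  · rw [hSif, hS0]
  · -- KL identity
    have hDif : (∑ α, (if 0 < p α then p α * Real.log (p α / phat α) else 0))
        = ∑ α, p α * Real.log (p α / phat α) := by
      refine Finset.sum_congr rfl fun α _ => ?_
      by_cases h : 0 < p α
      · simp [h]
      · have h0 : p α = 0 := le_antisymm (not_lt.mp h) (hp0 α)
        simp [h0]
    have hdecp : ∑ α, p α * Real.log (p α)
        = ∑ α, p α * Real.log (phat α) + ∑ α, p α * Real.log (p α / phat α) := by
      rw [← Finset.sum_add_distrib]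
      refine Finset.sum_congr rfl fun α _ => ?_
      rcases eq_or_lt_of_le (hp0 α) with h0 | hppos
      · have hp' : p α = 0 := h0.symm
        simp [hp']
      · have hph : 0 < phat α := by
          rcases eq_or_lt_of_le (hphat0 α) with h | h
          · exact absurd (hsupp α h.symm) (ne_of_gt hppos)
          · exact h
        rw [Real.log_div (ne_of_gt hppos) (ne_of_gt hph)]
        ring
    have hcrossp : ∑ α, p α * Real.log (phat α)
        = ∑ α, phat α * Real.log (phat α) + S := by
      rw [hSdef, ← Finset.sum_add_distrib]
      refine Finset.sum_congr rfl fun α _ => ?_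
      ring
    rw [hDif]
    rw [hS0] at hcrossp
    linarith
end

section
/- The IPF update is a KL-projection in the following sense: if f is a probability distribution with marginal m̂_a = Σ_α C_{aα} f_α, and p a probability distribution with m_a = Σ_α C_{aα} p_α > 0, 1 − m_a = Σ_α (1−C_{aα}) p_α > 0, and p_α > 0 whenever f_α > 0, then for the updated distribution p'_α = p_α (m̂_a/m_a)^{C_{aα}} ((1−m̂_a)/(1−m_a))^{1−C_{aα}} one has D_KL(f‖p') = D_KL(f‖p) − d_a, where d_a = m̂_a log(m̂_a/m_a) + (1−m̂_a) log((1−m̂_a)/(1−m_a)) ≥ 0 is the binary KL divergence of the marginals. In particular the KL divergence of f from the IPF estimate does not increase under the update. -/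
lemma kl_term_lb {x y : ℝ} (hx : 0 ≤ x) (hy : 0 < y) :
    x - y ≤ x * Real.log (x / y) := by
  rcases eq_or_lt_of_le hx with h | h
  · simp [← h]
    linarith
  · have h1 : Real.log (y / x) ≤ y / x - 1 :=
      Real.log_le_sub_one_of_pos (by positivity)
    have h2 : Real.log (y / x) = - Real.log (x / y) := by
      rw [← Real.log_inv, inv_div]
    rw [h2] at h1
    have := mul_le_mul_of_nonneg_left h1 h.le
    have hxne : x ≠ 0 := h.ne'
    rw [mul_sub, mul_div_cancel₀ _ hxne] at this
    nlinarith

/-- IPF update as a KL-projection: if `f` is a probability distribution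
with marginal `m̂ = ∑ α, C a α * f α`, and `p` a probability distribution with model
marginal `m = ∑ α, C a α * p α ∈ (0,1)` (so also `1 - m > 0`) whose support contains that
of `f`, then the updated distribution
`p' α = p α * (m̂/m)^{C a α} * ((1-m̂)/(1-m))^{1-C a α}` satisfies
`D_KL(f‖p') = D_KL(f‖p) - d_a`, where
`d_a = m̂ log(m̂/m) + (1-m̂) log((1-m̂)/(1-m)) ≥ 0` is the binary KL divergence of the
marginals; in particular the KL divergence does not increase under the update. -/
theorem ipf_step_kl_projection {A : Type*} [Fintype A] {D : ℕ}
    (C : Fin D → A → ℝ) (hC : ∀ a α, C a α = 0 ∨ C a α = 1)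
    (f p : A → ℝ)
    (hf0 : ∀ α, 0 ≤ f α) (hf1 : ∑ α, f α = 1)
    (hp0 : ∀ α, 0 ≤ p α) (hp1 : ∑ α, p α = 1)
    (hsupp : ∀ α, 0 < f α → 0 < p α)
    (a : Fin D)
    (hm : 0 < ∑ α, C a α * p α) (hm' : ∑ α, C a α * p α < 1) :
    (∑ α, (if 0 < f α then f α * Real.log (f α /
        (p α * (if C a α = 1 then (∑ β, C a β * f β) / (∑ β, C a β * p β)
                else (1 - ∑ β, C a β * f β) / (1 - ∑ β, C a β * p β)))) else 0)) =
      (∑ α, (if 0 < f α then f α * Real.log (f α / p α) else 0)) -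
        ((∑ β, C a β * f β) * Real.log ((∑ β, C a β * f β) / (∑ β, C a β * p β)) +
          (1 - ∑ β, C a β * f β) *
            Real.log ((1 - ∑ β, C a β * f β) / (1 - ∑ β, C a β * p β))) ∧
    0 ≤ (∑ β, C a β * f β) * Real.log ((∑ β, C a β * f β) / (∑ β, C a β * p β)) +
          (1 - ∑ β, C a β * f β) *
            Real.log ((1 - ∑ β, C a β * f β) / (1 - ∑ β, C a β * p β)) := by
  set mh : ℝ := ∑ β, C a β * f β with hmh
  set m : ℝ := ∑ β, C a β * p β with hmdef
  set L1 : ℝ := Real.log (mh / m) with hL1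
  set L0 : ℝ := Real.log ((1 - mh) / (1 - m)) with hL0
  have hmh0 : 0 ≤ mh := Finset.sum_nonneg fun β _ => by
    rcases hC a β with h | h <;> simp [h, hf0 β]
  have hmh1 : mh ≤ 1 := by
    rw [← hf1]
    apply Finset.sum_le_sum
    intro β _
    rcases hC a β with h | h <;> simp [h, hf0 β]
  have hm1 : 0 < 1 - m := by linarith
  -- pointwise lower bounds on marginals from individual terms
  have hterm1 : ∀ α, C a α = 1 → f α ≤ mh := by
    intro α h
    have := Finset.single_le_sum (f := fun β => C a β * f β)
      (fun β _ => by rcases hC a β with h' | h' <;> simp [h', hf0 β])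
      (Finset.mem_univ α)
    simpa [h] using this
  have hone : ∑ β, (1 - C a β) * f β = 1 - mh := by
    have h' : ∑ β, (1 - C a β) * f β = (∑ β, f β) - ∑ β, C a β * f β := by
      rw [← Finset.sum_sub_distrib]
      exact Finset.sum_congr rfl fun β _ => by ring
    rw [h', hf1, hmh]
  have hterm0 : ∀ α, C a α = 0 → f α ≤ 1 - mh := by
    intro α h
    rw [← hone]
    have := Finset.single_le_sum (f := fun β => (1 - C a β) * f β)
      (fun β _ => by rcases hC a β with h' | h' <;> simp [h', hf0 β])
      (Finset.mem_univ α)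
    simpa [h] using this
  constructor
  · have key : ∀ α, (if 0 < f α then f α * Real.log (f α /
        (p α * (if C a α = 1 then mh / m else (1 - mh) / (1 - m)))) else 0) =
        (if 0 < f α then f α * Real.log (f α / p α) else 0) -
          (C a α * f α * L1 + (1 - C a α) * f α * L0) := by
      intro α
      by_cases hfα : 0 < f α
      · have hpα : 0 < p α := hsupp α hfα
        simp only [if_pos hfα]
        rcases hC a α with h | h
        · have h1 : 0 < 1 - mh := lt_of_lt_of_le hfα (hterm0 α h)
          rw [if_neg (by rw [h]; norm_num)]
          have ht : (0:ℝ) < (1 - mh) / (1 - m) := by positivity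
          rw [show f α / (p α * ((1 - mh) / (1 - m)))
              = (f α / p α) / ((1 - mh) / (1 - m)) by
            rw [div_mul_eq_div_div_swap, div_div, mul_comm, ← div_div],
            Real.log_div (by positivity) (ne_of_gt ht), h]
          ring
        · have h1 : 0 < mh := lt_of_lt_of_le hfα (hterm1 α h)
          rw [if_pos h]
          have ht : (0:ℝ) < mh / m := by positivity
          rw [show f α / (p α * (mh / m)) = (f α / p α) / (mh / m) by
            rw [div_mul_eq_div_div_swap, div_div, mul_comm, ← div_div],
            Real.log_div (by positivity) (ne_of_gt ht), h]
          ring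
      · have : f α = 0 := le_antisymm (not_lt.mp hfα) (hf0 α)
        simp [hfα, this]
    calc (∑ α, (if 0 < f α then f α * Real.log (f α /
        (p α * (if C a α = 1 then mh / m else (1 - mh) / (1 - m)))) else 0))
        = ∑ α, ((if 0 < f α then f α * Real.log (f α / p α) else 0) -
          (C a α * f α * L1 + (1 - C a α) * f α * L0)) := by
          exact Finset.sum_congr rfl fun α _ => key α
      _ = (∑ α, (if 0 < f α then f α * Real.log (f α / p α) else 0)) -
          (mh * L1 + (1 - mh) * L0) := by
          rw [Finset.sum_sub_distrib]
          congr 1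
          rw [Finset.sum_add_distrib, ← Finset.sum_mul, ← Finset.sum_mul, hone, ← hmh]
  · have h1 : mh - m ≤ mh * L1 := kl_term_lb hmh0 hm
    have h2 : (1 - mh) - (1 - m) ≤ (1 - mh) * L0 := kl_term_lb (by linarith) hm1
    linarith
end

section
/- Invariance along the IPF iteration: suppose p and p' are two probability distributions satisfying the same marginal constraints Σ_α C_{aα} p_α = Σ_α C_{aα} p'_α = m̂_a for all a, and suppose p^{(0)} is the uniform distribution. If each subsequent p^{(k)} is obtained from p^{(k−1)} by the IPF update with respect to some constraint row a(k) (multiplying by (m̂_{a(k)}/m^{(k−1)}_{a(k)})^{C_{a(k)α}}, with all involved marginals positive), then Σ_α (p_α − p'_α) log p^{(k)}_α = 0 for every k ≥ 0. -/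
/-- invariance along the IPF iteration: suppose `p` and `p'` are two
probability distributions satisfying the same marginal constraints
`∑ α, C b α * p α = ∑ α, C b α * p' α = m̂ b` for all `b`, the iteration starts at the
uniform distribution `P 0 = 1/|A|`, and each `P (k+1)` is obtained from `P k` by the IPF
update with respect to constraint row `a k` (all involved marginals and all `P k α` being
positive).  Then `∑ α, (p α - p' α) * log (P k α) = 0` for every `k`. -/
theorem ipf_invariant_sum {A : Type*} [Fintype A] [Nonempty A] {D : ℕ}
    (C : Fin D → A → ℝ) (hC : ∀ b α, C b α = 0 ∨ C b α = 1)
    (mhat : Fin D → ℝ) (hmhat : ∀ b, 0 < mhat b)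
    (p p' : A → ℝ)
    (hp0 : ∀ α, 0 ≤ p α) (hp1 : ∑ α, p α = 1)
    (hp'0 : ∀ α, 0 ≤ p' α) (hp'1 : ∑ α, p' α = 1)
    (hpc : ∀ b, ∑ α, C b α * p α = mhat b)
    (hp'c : ∀ b, ∑ α, C b α * p' α = mhat b)
    (a : ℕ → Fin D) (P : ℕ → A → ℝ)
    (hP0 : ∀ α, P 0 α = 1 / (Fintype.card A : ℝ))
    (hmpos : ∀ k, 0 < ∑ β, C (a k) β * P k β)
    (hPpos : ∀ k α, 0 < P k α)
    (hstep : ∀ k α, P (k + 1) α =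
      P k α * (if C (a k) α = 1 then mhat (a k) / (∑ β, C (a k) β * P k β) else 1)) :
    ∀ k, ∑ α, (p α - p' α) * Real.log (P k α) = 0 := by
  intro k
  induction k with
  | zero =>
      have : ∀ α, (p α - p' α) * Real.log (P 0 α)
          = (p α - p' α) * Real.log (1 / (Fintype.card A : ℝ)) := by
        intro α; rw [hP0]
      rw [Finset.sum_congr rfl (fun α _ => this α), ← Finset.sum_mul,
        Finset.sum_sub_distrib, hp1, hp'1]
      ring
  | succ k ih =>
      set r := mhat (a k) / (∑ β, C (a k) β * P k β) with hr
      have hrpos : 0 < r := div_pos (hmhat _) (hmpos k)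
      have key : ∀ α, Real.log (P (k+1) α)
          = Real.log (P k α) + C (a k) α * Real.log r := by
        intro α
        rw [hstep k α]
        rcases hC (a k) α with h | h
        · simp [h, (hPpos k α).ne']
        · rw [if_pos h, Real.log_mul (hPpos k α).ne' hrpos.ne', h, one_mul]
      have : ∑ α, (p α - p' α) * Real.log (P (k+1) α)
          = (∑ α, (p α - p' α) * Real.log (P k α))
            + (∑ α, (p α - p' α) * C (a k) α) * Real.log r := by
        rw [Finset.sum_congr rfl (fun α _ => by rw [key α]), Finset.sum_mul,
          ← Finset.sum_add_distrib]
        exact Finset.sum_congr rfl (fun α _ => by ring)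
      rw [this, ih]
      have : ∑ α, (p α - p' α) * C (a k) α = 0 := by
        have := hpc (a k); have := hp'c (a k)
        have h1 : ∑ α, (p α - p' α) * C (a k) α
            = (∑ α, C (a k) α * p α) - (∑ α, C (a k) α * p' α) := by
          rw [← Finset.sum_sub_distrib]
          exact Finset.sum_congr rfl (fun α _ => by ring)
        rw [h1, hpc, hp'c]; ring
      rw [this]; ring
end

section
/- For the IPF update with respect to constraint row a, and any distribution p satisfying Σ_α C_{aα} p_α = m̂_a, the 'Pythagorean' identity Σ_α log(p^{new}_α / p^{old}_α) · (p_α − p^{new}_α) = 0 holds, which is equivalent to D_KL(p‖p^{old}) = D_KL(p‖p^{new}) + D_KL(p^{new}‖p^{old}). -/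
/-- Pythagorean identity for one IPF step: for the IPF update with respect
to constraint row `a` applied to a strictly positive distribution `pold` (giving
`pnew α = pold α * (m̂/m)^{C a α}`), and any probability distribution `p` satisfying
`∑ α, C a α * p α = m̂`, one has
`∑ α, log (pnew α / pold α) * (p α - pnew α) = 0`, which is equivalent to
`D_KL(p‖pold) = D_KL(p‖pnew) + D_KL(pnew‖pold)`. -/
theorem ipf_step_pythagorean {A : Type*} [Fintype A] {D : ℕ}
    (C : Fin D → A → ℝ) (hC : ∀ b α, C b α = 0 ∨ C b α = 1)
    (pold : A → ℝ) (hpold : ∀ α, 0 < pold α) (hpold1 : ∑ α, pold α = 1)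
    (a : Fin D) (mhat : ℝ) (hmhat : 0 < mhat)
    (hm : 0 < ∑ β, C a β * pold β)
    (p : A → ℝ) (hp0 : ∀ α, 0 ≤ p α) (hp1 : ∑ α, p α = 1)
    (hpc : ∑ α, C a α * p α = mhat) :
    (∑ α, Real.log ((pold α * (if C a α = 1 then mhat / (∑ β, C a β * pold β) else 1)) /
        pold α) * (p α - pold α * (if C a α = 1 then mhat / (∑ β, C a β * pold β) else 1)))
      = 0 ∧
    (∑ α, (if 0 < p α then p α * Real.log (p α / pold α) else 0)) =
      (∑ α, (if 0 < p α then p α * Real.log (p α /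
          (pold α * (if C a α = 1 then mhat / (∑ β, C a β * pold β) else 1))) else 0)) +
        ∑ α, (pold α * (if C a α = 1 then mhat / (∑ β, C a β * pold β) else 1)) *
          Real.log ((pold α * (if C a α = 1 then mhat / (∑ β, C a β * pold β) else 1)) /
            pold α) := by
  set m : ℝ := ∑ β, C a β * pold β with hm_def
  set r : ℝ := mhat / m with hr_def
  have hrpos : 0 < r := div_pos hmhat hm
  have hrm : r * m = mhat := div_mul_cancel₀ mhat hm.ne'
  have key1 : (∑ α, Real.log ((pold α * (if C a α = 1 then r else 1)) / pold α)
      * (p α - pold α * (if C a α = 1 then r else 1)))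
      = ∑ α, C a α * (Real.log r * (p α - pold α * r)) := by
    refine Finset.sum_congr rfl fun α _ => ?_
    rcases hC a α with h | h
    · simp [h, div_self (hpold α).ne']
    · simp [h, mul_div_cancel_left₀ _ (hpold α).ne']
  have expand : ∀ α, C a α * (Real.log r * (p α - pold α * r))
      = Real.log r * (C a α * p α) - (Real.log r * r) * (C a α * pold α) := fun α => by ring
  have part1 : (∑ α, Real.log ((pold α * (if C a α = 1 then r else 1)) / pold α)
      * (p α - pold α * (if C a α = 1 then r else 1))) = 0 := by
    rw [key1]
    simp only [expand]
    rw [Finset.sum_sub_distrib, ← Finset.mul_sum, ← Finset.mul_sum, hpc, ← hm_def,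
      mul_assoc, hrm]
    ring
  refine ⟨part1, ?_⟩
  have h12 : (∑ α, (if 0 < p α then p α * Real.log (p α / pold α) else 0)) -
      (∑ α, (if 0 < p α then p α * Real.log (p α /
        (pold α * (if C a α = 1 then r else 1))) else 0)) = Real.log r * mhat := by
    rw [← Finset.sum_sub_distrib]
    have term : ∀ α, (if 0 < p α then p α * Real.log (p α / pold α) else 0) -
        (if 0 < p α then p α * Real.log (p α /
          (pold α * (if C a α = 1 then r else 1))) else 0)
        = C a α * (Real.log r * p α) := by
      intro α
      rcases hC a α with h | h
      · simp [h]
      · by_cases hpα : 0 < p α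
        · simp only [h, if_pos hpα, one_mul, if_true]
          rw [← div_div, Real.log_div (div_pos hpα (hpold α)).ne' hrpos.ne']
          ring
        · have : p α = 0 := le_antisymm (not_lt.mp hpα) (hp0 α)
          simp [hpα, this]
    simp only [term]
    have : ∀ α, C a α * (Real.log r * p α) = Real.log r * (C a α * p α) := fun α => by ring
    simp only [this]
    rw [← Finset.mul_sum, hpc]
  have h3 : (∑ α, (pold α * (if C a α = 1 then r else 1)) *
      Real.log ((pold α * (if C a α = 1 then r else 1)) / pold α)) = Real.log r * mhat := by
    have term : ∀ α, (pold α * (if C a α = 1 then r else 1)) *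
        Real.log ((pold α * (if C a α = 1 then r else 1)) / pold α)
        = (r * Real.log r) * (C a α * pold α) := by
      intro α
      rcases hC a α with h | h
      · simp [h, div_self (hpold α).ne']
      · rw [h, if_pos rfl, mul_div_cancel_left₀ _ (hpold α).ne']
        ring
    simp only [term]
    rw [← Finset.mul_sum, ← hm_def, ← hrm]
    ring
  linarith
end

section
/- Gauge invariance of the MaxEnt solution: if q̂ and q̂' are two probability distributions in the same equivalence class [f], both of exponential form q̂_α = exp(Σ_a θ_a C_{aα}) and q̂'_α = exp(Σ_a θ'_a C_{aα}) for possibly different parameter vectors θ, θ' ∈ ℝ^D, then q̂ = q̂'. -/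
/-- For reals `u v`, `(exp u - exp v) * (u - v) ≥ 0`. -/
lemma exp_diff_mul_nonneg (u v : ℝ) : 0 ≤ (Real.exp u - Real.exp v) * (u - v) := by
  rcases le_total u v with h | h
  · have h1 : Real.exp u ≤ Real.exp v := Real.exp_le_exp.mpr h
    nlinarith
  · have h1 : Real.exp v ≤ Real.exp u := Real.exp_le_exp.mpr h
    nlinarith

/-- gauge invariance of the MaxEnt solution: if `qhat` and `qhat'` are two
probability distributions in the same equivalence class `[f]`, both of exponential form
with parameter vectors `θ`, `θ'`, then `qhat = qhat'`. -/
theorem gauge_invariance_maxent {A : Type*} [Fintype A] {D : ℕ}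
    (C : Fin D → A → ℝ) (hC : ∀ a α, C a α = 0 ∨ C a α = 1)
    (f : A → ℝ) (hf0 : ∀ α, 0 ≤ f α) (hf1 : ∑ α, f α = 1)
    (θ θ' : Fin D → ℝ) (qhat qhat' : A → ℝ)
    (hqhat : qhat ∈ eqClass C f) (hqhat' : qhat' ∈ eqClass C f)
    (hform : ∀ α, qhat α = Real.exp (∑ a, θ a * C a α))
    (hform' : ∀ α, qhat' α = Real.exp (∑ a, θ' a * C a α)) :
    qhat = qhat' := by
  obtain ⟨-, -, hcon⟩ := hqhat
  obtain ⟨-, -, hcon'⟩ := hqhat'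
  set u : A → ℝ := fun α => ∑ a, θ a * C a α with hu
  set v : A → ℝ := fun α => ∑ a, θ' a * C a α with hv
  have key : ∑ α, (Real.exp (u α) - Real.exp (v α)) * (u α - v α) = 0 := by
    have expand : ∀ α, (Real.exp (u α) - Real.exp (v α)) * (u α - v α)
        = ∑ a, (θ a - θ' a) * (C a α * qhat α - C a α * qhat' α) := by
      intro α
      rw [← hform α, ← hform' α]
      simp only [hu, hv]
      rw [← Finset.sum_sub_distrib]
      rw [Finset.mul_sum]
      apply Finset.sum_congr rfl
      intro a _
      ring
    rw [Finset.sum_congr rfl (fun α _ => expand α), Finset.sum_comm]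
    apply Finset.sum_eq_zero
    intro a _
    rw [← Finset.mul_sum, Finset.sum_sub_distrib, hcon a, hcon' a]
    ring_nf
  have hzero : ∀ α ∈ Finset.univ, (Real.exp (u α) - Real.exp (v α)) * (u α - v α) = 0 := by
    rw [← Finset.sum_eq_zero_iff_of_nonneg (fun α _ => exp_diff_mul_nonneg (u α) (v α))]
    exact key
  funext α
  have h := hzero α (Finset.mem_univ α)
  rw [hform α, hform' α]
  rcases mul_eq_zero.mp h with h1 | h1
  · linarith [sub_eq_zero.mp h1]
  · exact congrArg Real.exp (sub_eq_zero.mp h1)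
end
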